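/- arXiv:1304.0530 — 3 statements merged into one kernel-verified Lean document; each statement's English description precedes it below -/
import Mathlib

section
/- In the polynomial ring k[ξ_1, η_1, ..., ξ_n, η_n], the subring D_n of all polynomials f such that ∂f/∂ξ_i lies in the ideal (η_i) for every i has a k-vector-space basis given by the monomials ξ_1^{a_1}···ξ_n^{a_n} η_1^{b_1}···η_n^{b_n} such that a_i > 0 implies b_i > 0 for all i. -/
/-!
The exponents occurring in `∂f/∂ξ_i` are exactly the `m` with `m + e_{ξ_i}` in the support of
`f`: the coefficient picks up the factor `m_i + 1`, which is nonzero in characteristic zero. A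
polynomial lies in `(η_i)` iff each of its exponents has positive `η_i`-degree. Hence `D_n` is the
space of polynomials supported on the exponents with `a_i > 0 → b_i > 0`, and the monomials with
those exponents form a basis of it.
-/

open MvPolynomial

/-- The subring (here, submodule) `D_n` of polynomials `f` in
`k[ξ_1,η_1,...,ξ_n,η_n]` (with `ξ_i = X (i,false)`, `η_i = X (i,true)`)
such that `∂f/∂ξ_i ∈ (η_i)` for all `i`. -/
noncomputable def Dsub (k : Type*) [Field k] (n : ℕ) :
    Submodule k (MvPolynomial (Fin n × Bool) k) where
  carrier := {f | ∀ i : Fin n,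
    pderiv (i, false) f ∈ Ideal.span {(X (i, true) : MvPolynomial (Fin n × Bool) k)}}
  add_mem' := by
    intro a b ha hb i
    rw [map_add]
    exact Ideal.add_mem _ (ha i) (hb i)
  zero_mem' := by
    intro i
    rw [map_zero]
    exact Ideal.zero_mem _
  smul_mem' := by
    intro c f hf i
    rw [Derivation.map_smul]
    exact Submodule.smul_of_tower_mem _ c (hf i)

namespace MvPolynomial

variable {σ R : Type*}

theorem mem_ideal_span_X_singleton_iff [CommSemiring R] {f : MvPolynomial σ R} {j : σ} :
    f ∈ Ideal.span {(X j : MvPolynomial σ R)} ↔ ∀ m ∈ f.support, m j ≠ 0 := by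
  simpa using mem_ideal_span_X_image (x := f) (s := {j})

theorem mem_support_pderiv_iff [CommSemiring R] [NoZeroDivisors R] [CharZero R]
    {f : MvPolynomial σ R} {i : σ} {m : σ →₀ ℕ} :
    m ∈ (pderiv i f).support ↔ m + Finsupp.single i 1 ∈ f.support := by
  simp only [mem_support_iff, coeff_pderiv, ne_eq, mul_eq_zero, not_or]
  exact and_iff_left (Nat.cast_add_one_ne_zero (m i))

theorem pderiv_mem_ideal_span_X_iff [CommSemiring R] [NoZeroDivisors R] [CharZero R]
    {f : MvPolynomial σ R} {i j : σ} (hij : i ≠ j) :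
    pderiv i f ∈ Ideal.span {(X j : MvPolynomial σ R)} ↔
      ∀ d ∈ f.support, d i ≠ 0 → d j ≠ 0 := by
  have shift_apply (m : σ →₀ ℕ) : (m + Finsupp.single i 1 : σ →₀ ℕ) j = m j := by
    simp [hij]
  simp only [mem_ideal_span_X_singleton_iff, mem_support_pderiv_iff]
  constructor
  · intro h d hd hdi
    have hle : Finsupp.single i 1 ≤ d :=
      Finsupp.single_le_iff.mpr (Nat.one_le_iff_ne_zero.mpr hdi)
    rw [← tsub_add_cancel_of_le hle] at hd ⊢
    rw [shift_apply]
    exact h _ hd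
  · intro h m hm
    rw [← shift_apply]
    exact h _ hm (by simp)

end MvPolynomial

theorem Dsub_eq_restrictSupport (k : Type*) [Field k] [CharZero k] (n : ℕ) :
    Dsub k n = restrictSupport k
      {d | ∀ i : Fin n, 0 < d (i, false) → 0 < d (i, true)} := by
  ext f
  change (∀ i, _) ↔ _
  have hne (i : Fin n) : (i, false) ≠ (i, true) := by simp
  simp only [pderiv_mem_ideal_span_X_iff (hne _), mem_restrictSupport_iff, Set.subset_def,
    Finset.mem_coe, Set.mem_ofPred_eq, pos_iff_ne_zero]
  exact ⟨fun h d hd i ↦ h i d hd, fun h i d hd ↦ h d hd i⟩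

/-- a `k`-basis of `D_n` is given by the monomials
`ξ^a η^b` such that `a_i > 0` implies `b_i > 0` for all `i`. -/
theorem stmt1 {k : Type*} [Field k] [CharZero k] (n : ℕ) :
    LinearIndependent k
      (fun d : {d : (Fin n × Bool) →₀ ℕ //
          ∀ i : Fin n, 0 < d (i, false) → 0 < d (i, true)} =>
        (monomial d.1 (1 : k) : MvPolynomial (Fin n × Bool) k)) ∧
    Submodule.span k
      (Set.range (fun d : {d : (Fin n × Bool) →₀ ℕ //
          ∀ i : Fin n, 0 < d (i, false) → 0 < d (i, true)} =>
        (monomial d.1 (1 : k) : MvPolynomial (Fin n × Bool) k))) = Dsub k n := by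
  constructor
  · have h := (basisMonomials (Fin n × Bool) k).linearIndependent
    rw [coe_basisMonomials] at h
    exact h.comp Subtype.val Subtype.val_injective
  · rw [Dsub_eq_restrictSupport, restrictSupport_eq_span, Set.image_eq_range]
    rfl
end

section
/- With the grading deg p_{a,b} = a + b, the subalgebra of Λ_2 generated by the elements p_{a+1,b} − p_{a,b+1} (a, b ≥ 0) is a free polynomial algebra with exactly k free generators in each degree k ≥ 1, and hence its Hilbert series is Π_{k≥1}(1 − t^k)^{−k}. -/
open MvPolynomial

/-- The generator `p_{a+1,b} - p_{a,b+1}` of the subalgebra, inside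
`Λ_2 = k[p_{a,b} : (a,b) ≠ (0,0)]`. -/
noncomputable def lambdaGen (k : Type*) [Field k] (ab : ℕ × ℕ) :
    MvPolynomial {p : ℕ × ℕ // p ≠ (0, 0)} k :=
  X ⟨(ab.1 + 1, ab.2), by simp [Prod.ext_iff]⟩ - X ⟨(ab.1, ab.2 + 1), by simp [Prod.ext_iff]⟩

/-- The grading weight `deg p_{a,b} = a + b` on the variables of `Λ_2`. -/
def lambdaWeight : {p : ℕ × ℕ // p ≠ (0, 0)} → ℕ := fun v => v.1.1 + v.1.2

/-!
The substitution `p_{a,b} ↦ ∑_{i<a} Y_{i,a+b-1-i}` sends `p_{a+1,b} - p_{a,b+1}` to `Y_{a,b}`, so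
the generators are algebraically independent. Evaluation at algebraically independent weighted
homogeneous elements is an injective graded map from a weighted polynomial ring onto the subalgebra
they generate, so the degree `n` piece has dimension the number of monomials of weight `n` in
variables `Y_{a,b}` of weight `a+b+1`. That number is the `n`-th coefficient of
`∏_{a+b<n} (1 - t^{a+b+1})⁻¹`, and there are exactly `d` variables of weight `d`.
-/

open Finset

namespace Finsupp

variable {ι : Type*} {w : ι → ℕ} {s : Finset ι} {n : ℕ}

theorem sum_pointwise_smul_eq_weight {σ : ι →₀ ℕ} (hσ : σ.support ⊆ s) :
    ∑ i ∈ s, (w • σ) i = weight w σ := by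
  rw [weight_apply, sum_of_support_subset σ hσ (fun i c => c • w i) fun _ _ => zero_smul ℕ _]
  exact Finset.sum_congr rfl fun i _ => mul_comm _ _

theorem image_pointwise_smul_setOf_weight_eq [DecidableEq ι] (hs : ∀ i, w i ≤ n → i ∈ s) :
    (w • ·) '' {σ : ι →₀ ℕ | weight w σ = n} =
      ↑{l ∈ s.finsuppAntidiag n | ∀ i ∈ s, w i ∣ l i} := by
  ext l
  simp only [Set.mem_image, Set.mem_ofPred_eq, coe_filter, mem_finsuppAntidiag]
  constructor
  · rintro ⟨σ, rfl, rfl⟩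
    have hσ : σ.support ⊆ s := fun i hi =>
      hs i (le_weight_of_ne_zero' w (mem_support_iff.mp hi))
    refine ⟨⟨sum_pointwise_smul_eq_weight hσ, fun i hi => hσ ?_⟩, fun i _ => ?_⟩
    · simpa using right_ne_zero_of_mul (mem_support_iff.mp hi)
    · simp
  · rintro ⟨⟨hsum, hl⟩, hdvd⟩
    have hdvd' : ∀ i, w i ∣ l i := fun i => by
      by_cases hi : i ∈ s
      · exact hdvd i hi
      · simp [notMem_support_iff.mp fun h => hi (hl h)]
    let σ : ι →₀ ℕ := onFinset l.support (fun i => l i / w i) fun i hi =>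
      mem_support_iff.mpr fun h => hi (by simp [h])
    have hσl : w • σ = l := ext fun i => by simp [σ, Nat.mul_div_cancel' (hdvd' i)]
    have hσ : σ.support ⊆ s := support_onFinset_subset.trans hl
    exact ⟨σ, by rw [← sum_pointwise_smul_eq_weight hσ, hσl, hsum], hσl⟩

theorem ncard_setOf_weight_eq [DecidableEq ι] (hw : ∀ i, w i ≠ 0) (hs : ∀ i, w i ≤ n → i ∈ s) :
    {σ : ι →₀ ℕ | weight w σ = n}.ncard = #{l ∈ s.finsuppAntidiag n | ∀ i ∈ s, w i ∣ l i} := by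
  have hinj : Function.Injective (w • · : (ι →₀ ℕ) → ι →₀ ℕ) := fun σ τ h => ext fun i =>
    Nat.eq_of_mul_eq_mul_left (Nat.pos_of_ne_zero (hw i)) (by simpa using DFunLike.congr_fun h i)
  rw [← Set.ncard_coe_finset, ← image_pointwise_smul_setOf_weight_eq hs,
    Set.ncard_image_of_injective _ hinj]

end Finsupp

namespace PowerSeries

variable {K : Type*} [Field K]

theorem inv_one_sub_X_pow_eq_expand {d : ℕ} (hd : d ≠ 0) :
    (1 - X ^ d : K⟦X⟧)⁻¹ = expand d hd (mk 1) := by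
  have hc : constantCoeff (1 - X ^ d : K⟦X⟧) ≠ 0 := by simp [hd]
  have hexp : (1 - X ^ d : K⟦X⟧) = expand d hd (1 - X) := by simp
  rw [inv_eq_iff_mul_eq_one hc, hexp, ← map_mul, mk_one_mul_one_sub_eq_one, map_one]

theorem coeff_inv_one_sub_X_pow {d : ℕ} (hd : d ≠ 0) (m : ℕ) :
    coeff m (1 - X ^ d : K⟦X⟧)⁻¹ = if d ∣ m then 1 else 0 := by
  rw [inv_one_sub_X_pow_eq_expand hd, coeff_expand]
  simp

theorem coeff_prod_inv_one_sub_X_pow {ι : Type*} [DecidableEq ι] {s : Finset ι} {w : ι → ℕ}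
    (hw : ∀ i ∈ s, w i ≠ 0) (n : ℕ) :
    coeff n (∏ i ∈ s, (1 - X ^ w i : K⟦X⟧)⁻¹) =
      #{l ∈ s.finsuppAntidiag n | ∀ i ∈ s, w i ∣ l i} := by
  rw [coeff_prod, ← sum_boole]
  refine sum_congr rfl fun l _ => ?_
  rw [prod_congr rfl fun i hi => coeff_inv_one_sub_X_pow (hw i hi) (l i), prod_boole]

theorem coeff_prod_inv_one_sub_X_pow_eq_ncard {ι : Type*} {s : Finset ι} {w : ι → ℕ}
    (hw : ∀ i, w i ≠ 0) {n : ℕ} (hs : ∀ i, w i ≤ n → i ∈ s) :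
    coeff n (∏ i ∈ s, (1 - X ^ w i : K⟦X⟧)⁻¹) = {σ : ι →₀ ℕ | σ.weight w = n}.ncard := by
  classical
  rw [coeff_prod_inv_one_sub_X_pow fun i _ => hw i, Finsupp.ncard_setOf_weight_eq hw hs]

end PowerSeries

namespace MvPolynomial

section WeightedAeval

variable {R σ ι M : Type*} [CommSemiring R] [AddCommMonoid M] {w : σ → M} {w' : ι → M}
  {f : ι → MvPolynomial σ R}

theorem isWeightedHomogeneous_aeval_monomial
    (hf : ∀ i, (f i).IsWeightedHomogeneous w (w' i)) (d : ι →₀ ℕ) (r : R) :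
    (aeval f (monomial d r)).IsWeightedHomogeneous w (Finsupp.weight w' d) := by
  rw [aeval_monomial, algebraMap_eq, Finsupp.weight_apply]
  exact (IsWeightedHomogeneous.prod _ _ _ fun i _ => (hf i).pow (d i)).C_mul r

theorem weightedHomogeneousComponent_aeval
    (hf : ∀ i, (f i).IsWeightedHomogeneous w (w' i)) (m : M) (p : MvPolynomial ι R) :
    weightedHomogeneousComponent w m (aeval f p) =
      aeval f (weightedHomogeneousComponent w' m p) := by
  classical
  induction p using induction_on' with
  | monomial d r =>
    rw [weightedHomogeneousComponent_of_mem (isWeightedHomogeneous_aeval_monomial hf d r),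
      weightedHomogeneousComponent_of_mem (isWeightedHomogeneous_monomial w' d r rfl)]
    split_ifs <;> simp
  | add p q hp hq => simp only [map_add, hp, hq]

theorem map_aeval_weightedHomogeneousSubmodule
    (hf : ∀ i, (f i).IsWeightedHomogeneous w (w' i)) (m : M) :
    (weightedHomogeneousSubmodule R w' m).map (aeval f).toLinearMap =
      Subalgebra.toSubmodule (Algebra.adjoin R (Set.range f)) ⊓
        weightedHomogeneousSubmodule R w m := by
  ext x
  simp only [Submodule.mem_map, Submodule.mem_inf, Subalgebra.mem_toSubmodule,
    Algebra.adjoin_range_eq_range_aeval, AlgHom.mem_range, AlgHom.toLinearMap_apply]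
  constructor
  · rintro ⟨p, hp, rfl⟩
    refine ⟨⟨p, rfl⟩, ?_⟩
    rw [← weightedHomogeneousComponent_eq_self hp, ← weightedHomogeneousComponent_aeval hf]
    exact weightedHomogeneousComponent_mem w _ m
  · rintro ⟨⟨p, rfl⟩, hx⟩
    refine ⟨weightedHomogeneousComponent w' m p, weightedHomogeneousComponent_mem w' p m, ?_⟩
    rw [← weightedHomogeneousComponent_aeval hf, weightedHomogeneousComponent_eq_self hx]

end WeightedAeval

theorem finrank_weightedHomogeneousSubmodule {R σ M : Type*} [CommRing R] [StrongRankCondition R]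
    [AddCommMonoid M] (w : σ → M) (m : M) :
    Module.finrank R (weightedHomogeneousSubmodule R w m) =
      {d : σ →₀ ℕ | Finsupp.weight w d = m}.ncard := by
  rw [weightedHomogeneousSubmodule_eq_finsupp_supported,
    (AddMonoidAlgebra.supportedEquivFinsupp _).finrank_eq, Module.finrank, rank_finsupp_self,
    Cardinal.toNat_lift, ← Nat.card_coe_set_eq, Nat.card]

theorem finrank_adjoin_inf_weightedHomogeneousSubmodule {R σ ι M : Type*} [CommRing R]
    [AddCommMonoid M] {w : σ → M} {w' : ι → M} {f : ι → MvPolynomial σ R}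
    (hind : AlgebraicIndependent R f) (hf : ∀ i, (f i).IsWeightedHomogeneous w (w' i)) (m : M) :
    Module.finrank R ↥(Subalgebra.toSubmodule (Algebra.adjoin R (Set.range f)) ⊓
        weightedHomogeneousSubmodule R w m) =
      Module.finrank R (weightedHomogeneousSubmodule R w' m) := by
  rw [← map_aeval_weightedHomogeneousSubmodule hf]
  exact (Submodule.equivMapOfInjective _
    (algebraicIndependent_iff_injective_aeval.mp hind) _).finrank_eq.symm

end MvPolynomial

noncomputable def lambdaRetraction (k : Type*) [Field k] :
    {p : ℕ × ℕ // p ≠ (0, 0)} → MvPolynomial (ℕ × ℕ) k :=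
  fun v => ∑ i ∈ Finset.range v.1.1, X (i, v.1.1 + v.1.2 - 1 - i)

theorem aeval_lambdaRetraction_lambdaGen {k : Type*} [Field k] (ab : ℕ × ℕ) :
    aeval (lambdaRetraction k) (lambdaGen k ab) = X ab := by
  obtain ⟨a, b⟩ := ab
  simp only [lambdaGen, lambdaRetraction, map_sub, aeval_X, Finset.sum_range_succ]
  have hb : a + 1 + b - 1 - a = b := by omega
  have hshift : ∀ i, a + 1 + b - 1 - i = a + (b + 1) - 1 - i := fun i => by omega
  simp only [hb, hshift, add_sub_cancel_left]

theorem algebraicIndependent_lambdaGen {k : Type*} [Field k] :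
    AlgebraicIndependent k (lambdaGen k) := by
  refine .of_comp (aeval (lambdaRetraction k)) ?_
  convert algebraicIndependent_X (ℕ × ℕ) k
  exact funext aeval_lambdaRetraction_lambdaGen

theorem isWeightedHomogeneous_lambdaGen {k : Type*} [Field k] (ab : ℕ × ℕ) :
    (lambdaGen k ab).IsWeightedHomogeneous lambdaWeight (ab.1 + ab.2 + 1) := by
  have hX : ∀ v, lambdaWeight v = ab.1 + ab.2 + 1 →
      (X v : MvPolynomial _ k).IsWeightedHomogeneous lambdaWeight (ab.1 + ab.2 + 1) :=
    fun v hv => hv ▸ isWeightedHomogeneous_X k lambdaWeight v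
  exact (hX _ (by simp only [lambdaWeight]; omega)).sub (hX _ (by simp only [lambdaWeight]; omega))

theorem ncard_setOf_add_add_one_eq {K : ℕ} (hK : 1 ≤ K) :
    {ab : ℕ × ℕ | ab.1 + ab.2 + 1 = K}.ncard = K := by
  have h : {ab : ℕ × ℕ | ab.1 + ab.2 + 1 = K} = ↑(antidiagonal (K - 1)) := by
    ext ⟨a, b⟩
    simp only [Set.mem_ofPred_eq, mem_coe, HasAntidiagonal.mem_antidiagonal]
    omega
  rw [h, Set.ncard_coe_finset, Nat.card_antidiagonal, Nat.sub_add_cancel hK]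

theorem prod_Icc_inv_one_sub_X_pow_pow_eq_prod_pairs {K : Type*} [Field K] (n : ℕ) :
    ∏ d ∈ Icc 1 n, ((1 - PowerSeries.X ^ d : PowerSeries K)⁻¹) ^ d =
      ∏ ab ∈ range n ×ˢ range n with ab.1 + ab.2 + 1 ≤ n,
        (1 - PowerSeries.X ^ (ab.1 + ab.2 + 1) : PowerSeries K)⁻¹ := by
  rw [← prod_fiberwise_of_maps_to' (g := fun ab : ℕ × ℕ => ab.1 + ab.2 + 1) (t := Icc 1 n)
    (by simp only [mem_filter, mem_Icc]; omega) fun d => (1 - PowerSeries.X ^ d : PowerSeries K)⁻¹]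
  refine prod_congr rfl fun d hd => ?_
  have hfiber : {ab ∈ {ab ∈ range n ×ˢ range n | ab.1 + ab.2 + 1 ≤ n} | ab.1 + ab.2 + 1 = d} =
      antidiagonal (d - 1) := by
    ext ⟨a, b⟩
    simp only [mem_Icc] at hd
    simp only [mem_filter, mem_product, mem_range, HasAntidiagonal.mem_antidiagonal]
    omega
  rw [prod_const, hfiber, Nat.card_antidiagonal, Nat.sub_add_cancel (mem_Icc.mp hd).1]

theorem stmt16_general {k : Type*} [Field k] :
    AlgebraicIndependent k (lambdaGen k) ∧
    (∀ ab : ℕ × ℕ,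
      (lambdaGen k ab).IsWeightedHomogeneous lambdaWeight (ab.1 + ab.2 + 1)) ∧
    (∀ K : ℕ, 1 ≤ K → Set.ncard {ab : ℕ × ℕ | ab.1 + ab.2 + 1 = K} = K) ∧
    ∀ n : ℕ,
      (Module.finrank k
          ↥(Subalgebra.toSubmodule (Algebra.adjoin k (Set.range (lambdaGen k))) ⊓
              weightedHomogeneousSubmodule k lambdaWeight n) : ℚ) =
        PowerSeries.coeff (R := ℚ) n (∏ d ∈ Finset.Icc 1 n, ((1 - PowerSeries.X ^ d)⁻¹) ^ d) := by
  refine ⟨algebraicIndependent_lambdaGen, isWeightedHomogeneous_lambdaGen,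
    fun K => ncard_setOf_add_add_one_eq, fun n => ?_⟩
  rw [finrank_adjoin_inf_weightedHomogeneousSubmodule algebraicIndependent_lambdaGen
      isWeightedHomogeneous_lambdaGen, finrank_weightedHomogeneousSubmodule,
    prod_Icc_inv_one_sub_X_pow_pow_eq_prod_pairs,
    PowerSeries.coeff_prod_inv_one_sub_X_pow_eq_ncard (by simp) fun ab hab => by
      simp only [mem_filter, mem_product, mem_range]; omega]

/-- with the grading `deg p_{a,b} = a + b`, the subalgebra of
`Λ_2` generated by the elements `p_{a+1,b} - p_{a,b+1}` is a free polynomial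
algebra (the generators are algebraically independent), each generator
`p_{a+1,b} - p_{a,b+1}` is homogeneous of degree `a + b + 1`, there are exactly
`K` generators in each degree `K ≥ 1`, and the Hilbert series of the subalgebra
is `Π_{d ≥ 1} (1 - t^d)^{-d}` (coefficientwise: the degree-`n` component has
dimension the `n`-th coefficient of the finite product over `1 ≤ d ≤ n`, which
agrees with the infinite product). -/
theorem stmt16 {k : Type*} [Field k] [CharZero k] :
    AlgebraicIndependent k (lambdaGen k) ∧
    (∀ ab : ℕ × ℕ,
      (lambdaGen k ab).IsWeightedHomogeneous lambdaWeight (ab.1 + ab.2 + 1)) ∧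
    (∀ K : ℕ, 1 ≤ K → Set.ncard {ab : ℕ × ℕ | ab.1 + ab.2 + 1 = K} = K) ∧
    ∀ n : ℕ,
      (Module.finrank k
          ↥(Subalgebra.toSubmodule (Algebra.adjoin k (Set.range (lambdaGen k))) ⊓
              weightedHomogeneousSubmodule k lambdaWeight n) : ℚ) =
        PowerSeries.coeff (R := ℚ) n (∏ d ∈ Finset.Icc 1 n, ((1 - PowerSeries.X ^ d)⁻¹) ^ d) :=
  stmt16_general
end

section
/- In the ring of formal power series over ℚ, the identity Σ_{k ≥ 0} f(a,b,k) t^k = (1 − t^{a+b})^{−a} · Π_{1 ≤ k ≤ a+b−1} (1 − t^k)^{−k} holds, where f(a,b,k) is the number of multisets of pairs (c,d) ∈ ℕ⁺ × ℕ with each (c,d) ≤ (a,b) in the order φ (listing pairs by increasing c+d, breaking ties so that (a,b) is the a-th pair of weight a+b) and total weight Σ(c+d) = k. -/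
/-!
Multisets supported on a finite set `S` of positively weighted elements have generating function
`∏_{i ∈ S} (1 - t^{wt i})⁻¹`: splitting by whether a fixed `i` occurs gives `F = G + t^{wt i} F`,
where removing one copy of `i` is a bijection onto the multisets of weight lowered by `wt i`.

Since `phiIdx (c, d) = C(c + d, 2) + c` and the values `C(w, 2) + c`, `1 ≤ c ≤ w`, fill the block
`(C(w, 2), C(w + 1, 2)]`, the pairs `(c, d) ≤ (a, b)` are all `w` pairs of each weight `w < a + b`
together with the `a` pairs `(1, a + b - 1), …, (a, b)` of weight `a + b`.
-/

/-- The position of the pair `(c, d)` (with `c ≥ 1`) in the enumeration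
`φ = ((1,0),(1,1),(2,0),(1,2),(2,1),(3,0),...)` of `ℕ⁺ × ℕ`, listing pairs by
increasing weight `c + d` and, within weight `w`, in the order
`(1,w-1),(2,w-2),...,(w,0)`. -/
def phiIdx (p : ℕ × ℕ) : ℕ := (p.1 + p.2 - 1) * (p.1 + p.2) / 2 + p.1

/-- `fcount19 a b K` is the number of multisets of pairs `(c,d) ∈ ℕ⁺ × ℕ` with
each `(c,d) ≤ (a,b)` in the order `φ` and total weight `Σ (c + d) = K`. -/
noncomputable def fcount19 (a b : ℕ) (K : ℕ) : ℕ :=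
  Set.ncard {s : Multiset (ℕ × ℕ) |
    (∀ p ∈ s, 1 ≤ p.1 ∧ phiIdx p ≤ phiIdx (a, b)) ∧
      (s.map fun p => p.1 + p.2).sum = K}

open Finset PowerSeries

section Multisets

variable {α : Type*}

def multisetsOfWeight (S : Finset α) (wt : α → ℕ) (K : ℕ) : Set (Multiset α) :=
  {s | (∀ x ∈ s, x ∈ S) ∧ (s.map wt).sum = K}

namespace multisetsOfWeight

variable {S : Finset α} {wt : α → ℕ}

lemma finite (hwt : ∀ i ∈ S, 0 < wt i) (K : ℕ) : (multisetsOfWeight S wt K).Finite := by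
  classical
  refine (Multiset.powerset (K • S.val)).toFinset.finite_toSet.subset fun s ⟨hS, hK⟩ => ?_
  have hcard : Multiset.card s ≤ K := by
    simpa [← hK] using Multiset.card_nsmul_le_sum (s := s.map wt) (a := 1)
      (Multiset.forall_mem_map_iff.2 fun x hx => hwt x (hS x hx))
  simp only [Finset.mem_coe, Multiset.mem_toFinset, Multiset.mem_powerset, Multiset.le_iff_count,
    Multiset.count_nsmul]
  intro x
  by_cases hx : x ∈ s
  · rw [Multiset.count_eq_one_of_mem S.nodup (hS x hx), mul_one]
    exact (Multiset.count_le_card x s).trans hcard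
  · simp [Multiset.count_eq_zero_of_notMem hx]

lemma ncard_empty (wt : α → ℕ) (K : ℕ) :
    (multisetsOfWeight ∅ wt K).ncard = if K = 0 then 1 else 0 := by
  have h : multisetsOfWeight ∅ wt K = {s | s = 0 ∧ 0 = K} := by
    ext s
    simp only [multisetsOfWeight, Finset.notMem_empty, imp_false,
      ← Multiset.eq_zero_iff_forall_notMem, Set.mem_ofPred_eq]
    constructor
    · rintro ⟨rfl, hK⟩
      exact ⟨rfl, by simpa using hK⟩
    · rintro ⟨rfl, rfl⟩
      simp
  split_ifs with hK
  · subst hK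
    simp [h]
  · simp [h, Ne.symm hK]

lemma sdiff_setOf_mem_insert [DecidableEq α] {i : α} (hi : i ∉ S) (K : ℕ) :
    multisetsOfWeight (insert i S) wt K \ {s | i ∈ s} = multisetsOfWeight S wt K := by
  ext s
  simp only [multisetsOfWeight, Set.mem_sdiff, Set.mem_ofPred_eq, Finset.mem_insert]
  constructor
  · rintro ⟨⟨hS, hK⟩, his⟩
    exact ⟨fun x hx => (hS x hx).resolve_left (by rintro rfl; exact his hx), hK⟩
  · rintro ⟨hS, hK⟩
    exact ⟨⟨fun x hx => Or.inr (hS x hx), hK⟩, fun his => hi (hS i his)⟩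

lemma image_cons {i : α} (hi : i ∈ S) (K : ℕ) :
    (i ::ₘ ·) '' multisetsOfWeight S wt K =
      multisetsOfWeight S wt (K + wt i) ∩ {s | i ∈ s} := by
  ext s
  simp only [multisetsOfWeight, Set.mem_image, Set.mem_inter_iff, Set.mem_ofPred_eq]
  constructor
  · rintro ⟨t, ⟨hS, hK⟩, rfl⟩
    refine ⟨⟨fun x hx => ?_, by simp [hK, add_comm]⟩, Multiset.mem_cons_self i t⟩
    rcases Multiset.mem_cons.mp hx with rfl | hx
    exacts [hi, hS x hx]
  · rintro ⟨⟨hS, hK⟩, his⟩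
    obtain ⟨t, rfl⟩ := Multiset.exists_cons_of_mem his
    simp only [Multiset.map_cons, Multiset.sum_cons] at hK
    exact ⟨t, ⟨fun x hx => hS x (Multiset.mem_cons_of_mem hx), by omega⟩, rfl⟩

lemma inter_setOf_mem_eq_empty {i : α} {K : ℕ} (hK : K < wt i) :
    multisetsOfWeight S wt K ∩ {s | i ∈ s} = ∅ := by
  refine Set.eq_empty_of_forall_notMem fun s ⟨⟨_, hsum⟩, his⟩ => ?_
  obtain ⟨t, rfl⟩ := Multiset.exists_cons_of_mem his
  simp only [Multiset.map_cons, Multiset.sum_cons] at hsum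
  omega

end multisetsOfWeight

theorem mk_ncard_multisetsOfWeight {k : Type*} [Field k] [DecidableEq α] (S : Finset α)
    (wt : α → ℕ) (hwt : ∀ i ∈ S, 0 < wt i) :
    (mk fun K => ((multisetsOfWeight S wt K).ncard : k)) = ∏ i ∈ S, (1 - X ^ wt i)⁻¹ := by
  induction S using Finset.induction with
  | empty =>
    ext K
    simp [multisetsOfWeight.ncard_empty, coeff_one]
  | insert i S hi ih =>
    rw [prod_insert hi, ← ih fun j hj => hwt j (mem_insert_of_mem hj)]
    set F : k⟦X⟧ := mk fun K => ((multisetsOfWeight (insert i S) wt K).ncard : k)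
    have hwi : 0 < wt i := hwt i (mem_insert_self i S)
    have hF : F = mk (fun K => ((multisetsOfWeight S wt K).ncard : k)) + X ^ wt i * F := by
      ext K
      have hfin := multisetsOfWeight.finite hwt K
      rw [coeff_mk, map_add, coeff_mk, coeff_X_pow_mul',
        ← Set.ncard_inter_add_ncard_sdiff_eq_ncard _ {s | i ∈ s} hfin,
        multisetsOfWeight.sdiff_setOf_mem_insert hi, Nat.cast_add, add_comm]
      rcases le_or_gt (wt i) K with hK | hK
      · obtain ⟨K, rfl⟩ := Nat.exists_eq_add_of_le' hK
        rw [if_pos hK, Nat.add_sub_cancel, coeff_mk,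
          ← multisetsOfWeight.image_cons (mem_insert_self i S),
          Set.ncard_image_of_injective _ fun _ _ => (Multiset.cons_inj_right i).mp]
      · rw [if_neg hK.not_ge, multisetsOfWeight.inter_setOf_mem_eq_empty hK]
        simp
    have hunit : constantCoeff (1 - X ^ wt i : k⟦X⟧) ≠ 0 := by
      simp [zero_pow hwi.ne']
    rw [mul_comm, eq_mul_inv_iff_mul_eq hunit]
    linear_combination hF

end Multisets

lemma phiIdx_eq_choose_two_add (p : ℕ × ℕ) : phiIdx p = (p.1 + p.2).choose 2 + p.1 := by
  rw [phiIdx, Nat.choose_two_right, mul_comm]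

lemma choose_two_add_le_choose_two_add_iff {w v c a : ℕ} (hc : 0 < c) (hcw : c ≤ w)
    (hav : a ≤ v) : w.choose 2 + c ≤ v.choose 2 + a ↔ w < v ∨ w = v ∧ c ≤ a := by
  have hsucc (n : ℕ) : (n + 1).choose 2 = n.choose 2 + n := by
    rw [Nat.choose_succ_succ, Nat.choose_one_right, add_comm]
  rcases lt_trichotomy w v with hwv | rfl | hvw
  · have := Nat.choose_le_choose 2 (Nat.succ_le_of_lt hwv)
    rw [hsucc] at this
    omega
  · omega
  · have := Nat.choose_le_choose 2 (Nat.succ_le_of_lt hvw)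
    rw [hsucc] at this
    omega

lemma phiIdx_le_phiIdx_iff {p : ℕ × ℕ} (hp : 0 < p.1) (q : ℕ × ℕ) :
    phiIdx p ≤ phiIdx q ↔ p.1 + p.2 < q.1 + q.2 ∨ p.1 + p.2 = q.1 + q.2 ∧ p.1 ≤ q.1 := by
  rw [phiIdx_eq_choose_two_add, phiIdx_eq_choose_two_add]
  exact choose_two_add_le_choose_two_add_iff hp (by omega) (by omega)

def weightRow (w m : ℕ) : Finset (ℕ × ℕ) := (Icc 1 m).image fun c => (c, w - c)

lemma mem_weightRow {w m : ℕ} (hm : m ≤ w) {p : ℕ × ℕ} :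
    p ∈ weightRow w m ↔ 1 ≤ p.1 ∧ p.1 ≤ m ∧ p.1 + p.2 = w := by
  obtain ⟨c, d⟩ := p
  simp only [weightRow, mem_image, mem_Icc, Prod.mk.injEq]
  constructor
  · rintro ⟨c, hc, rfl, rfl⟩
    omega
  · rintro ⟨h1, h2, rfl⟩
    exact ⟨c, ⟨h1, h2⟩, rfl, by omega⟩

lemma prod_weightRow {M : Type*} [CommMonoid M] (g : ℕ → M) {w m : ℕ} (hm : m ≤ w) :
    ∏ p ∈ weightRow w m, g (p.1 + p.2) = g w ^ m := by
  rw [prod_congr rfl fun p hp => by rw [((mem_weightRow hm).1 hp).2.2], prod_const, weightRow,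
    card_image_of_injective _ fun c c' h => congrArg Prod.fst h, Nat.card_Icc, Nat.add_sub_cancel]

def phiIic (a b : ℕ) : Finset (ℕ × ℕ) :=
  weightRow (a + b) a ∪ (Icc 1 (a + b - 1)).biUnion fun w => weightRow w w

lemma mem_phiIic {a b : ℕ} {p : ℕ × ℕ} :
    p ∈ phiIic a b ↔ 1 ≤ p.1 ∧ phiIdx p ≤ phiIdx (a, b) := by
  simp only [phiIic, mem_union, mem_biUnion, mem_Icc]
  constructor
  · rintro (hp | ⟨w, hw, hp⟩)
    · obtain ⟨h1, h2, h3⟩ := (mem_weightRow (by omega)).1 hp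
      exact ⟨h1, (phiIdx_le_phiIdx_iff h1 _).2 (Or.inr ⟨h3, h2⟩)⟩
    · obtain ⟨h1, -, h3⟩ := (mem_weightRow le_rfl).1 hp
      exact ⟨h1, (phiIdx_le_phiIdx_iff h1 _).2 (Or.inl (by simp only; omega))⟩
  · rintro ⟨h1, h⟩
    rcases (phiIdx_le_phiIdx_iff h1 _).1 h with hlt | ⟨heq, hle⟩
    · exact Or.inr ⟨p.1 + p.2, ⟨by omega, by simp only at hlt; omega⟩,
        (mem_weightRow le_rfl).2 ⟨h1, by omega, rfl⟩⟩
    · exact Or.inl ((mem_weightRow (by omega)).2 ⟨h1, hle, heq⟩)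

lemma prod_phiIic {M : Type*} [CommMonoid M] (g : ℕ → M) (a b : ℕ) :
    ∏ p ∈ phiIic a b, g (p.1 + p.2) = g (a + b) ^ a * ∏ w ∈ Icc 1 (a + b - 1), g w ^ w := by
  rw [phiIic, prod_union, prod_weightRow g (by omega), prod_biUnion]
  · exact congrArg _ (prod_congr rfl fun w _ => prod_weightRow g le_rfl)
  · intro w _ w' _ hne
    refine disjoint_left.2 fun p hp hp' => hne ?_
    rw [(mem_weightRow le_rfl).1 hp |>.2.2.symm, (mem_weightRow le_rfl).1 hp' |>.2.2]
  · refine disjoint_left.2 fun p hp hp' => ?_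
    obtain ⟨w, hw, hpw⟩ := mem_biUnion.1 hp'
    have := ((mem_weightRow (by omega)).1 hp).2.2
    have := ((mem_weightRow le_rfl).1 hpw).2.2
    simp only [mem_Icc] at hw
    omega

lemma fcount19_eq_ncard_multisetsOfWeight (a b K : ℕ) :
    fcount19 a b K = (multisetsOfWeight (phiIic a b) (fun p => p.1 + p.2) K).ncard := by
  simp only [fcount19, multisetsOfWeight, mem_phiIic]

theorem stmt19_general (a b : ℕ) :
    (PowerSeries.mk fun K => (fcount19 a b K : ℚ)) =
      ((1 - PowerSeries.X ^ (a + b))⁻¹) ^ a *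
        ∏ d ∈ Finset.Icc 1 (a + b - 1), ((1 - PowerSeries.X ^ d)⁻¹) ^ d := by
  have hwt : ∀ p ∈ phiIic a b, 0 < p.1 + p.2 := fun p hp => by
    have := (mem_phiIic.1 hp).1
    omega
  simp only [fcount19_eq_ncard_multisetsOfWeight]
  rw [mk_ncard_multisetsOfWeight _ _ hwt, prod_phiIic (fun w => (1 - X ^ w)⁻¹)]

/-- in `ℚ[[t]]`, the identity
`Σ_{k ≥ 0} f(a,b,k) t^k = (1 - t^{a+b})^{-a} · Π_{1 ≤ k ≤ a+b-1} (1 - t^k)^{-k}`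
holds. -/
theorem stmt19 (a b : ℕ) (ha : 1 ≤ a) :
    (PowerSeries.mk fun K => (fcount19 a b K : ℚ)) =
      ((1 - PowerSeries.X ^ (a + b))⁻¹) ^ a *
        ∏ d ∈ Finset.Icc 1 (a + b - 1), ((1 - PowerSeries.X ^ d)⁻¹) ^ d :=
  stmt19_general a b
end
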